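/- The spherical polar map ω ↦ ω* = {y ∈ S^m : d(y,ω) ≥ π/2}, from the space of nonempty compact spherically convex subsets of S^m with the Hausdorff metric to itself, is continuous. -/

import Mathlib

open MeasureTheory Metric Set Real
open scoped ENNReal

noncomputable section

abbrev Euc (m : ℕ) : Type := EuclideanSpace ℝ (Fin (m + 1))

abbrev Sph (m : ℕ) : Type := Metric.sphere (0 : Euc m) 1

/-- geodesic distance on the sphere -/
def gdist {m : ℕ} (n x : Sph m) : ℝ :=
  Real.arccos (inner ℝ (n : Euc m) (x : Euc m))

/-- the logarithmic cost, with values in `[0,∞]` -/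
def cost {m : ℕ} (n x : Sph m) : ℝ≥0∞ :=
  if 0 < (inner ℝ (n : Euc m) (x : Euc m) : ℝ) then
    ENNReal.ofReal (-Real.log (inner ℝ (n : Euc m) (x : Euc m))) else ∞

/-- the uniform probability measure on the sphere -/
def unif (m : ℕ) : Measure (Sph m) :=
  ((volume : Measure (Euc m)).toSphere Set.univ)⁻¹ • (volume : Measure (Euc m)).toSphere

/-- the radial function of a set with respect to the origin -/
def radial {m : ℕ} (Ω : Set (Euc m)) (x : Sph m) : ℝ :=
  sSup {s : ℝ | 0 ≤ s ∧ s • (x : Euc m) ∈ Ω}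

/-- the Euclidean cone generated by a subset of the sphere -/
def cone {m : ℕ} (A : Set (Sph m)) : Set (Euc m) :=
  {y | ∃ r : ℝ, 0 ≤ r ∧ ∃ x ∈ A, y = r • (x : Euc m)}

/-- a subset of the sphere is spherically convex if the cone it generates is convex -/
def SphConvex {m : ℕ} (A : Set (Sph m)) : Prop := Convex ℝ (cone A)

/-- open `r`-neighbourhood for the geodesic distance -/
def nbhd {m : ℕ} (V : Set (Sph m)) (r : ℝ) : Set (Sph m) :=
  {y | ∃ x ∈ V, gdist y x < r}

/-- the spherical polar set -/
def spolar {m : ℕ} (ω : Set (Sph m)) : Set (Sph m) :=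
  {y | ∀ x ∈ ω, (inner ℝ (y : Euc m) (x : Euc m) : ℝ) ≤ 0}

/-- the support function of a star-shaped set -/
def suppFn {m : ℕ} (F : Set (Euc m)) (n : Sph m) : ℝ :=
  ⨆ x : Sph m, radial F x * (inner ℝ (x : Euc m) (n : Euc m) : ℝ)

/-- the polar set in Euclidean space -/
def polar {m : ℕ} (F : Set (Euc m)) : Set (Euc m) :=
  {n | ∀ x ∈ F, (inner ℝ x n : ℝ) ≤ 1}

/-- the logarithmic cost, with values in `ℝ ∪ {±∞}` -/
def costE {m : ℕ} (n x : Sph m) : EReal :=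
  if 0 < (inner ℝ (n : Euc m) (x : Euc m) : ℝ) then
    ((-Real.log (inner ℝ (n : Euc m) (x : Euc m)) : ℝ) : EReal) else ⊤

/-!
For `y ∈ ω*` and `ω'` Hausdorff-close to `ω`, `y` makes an angle only slightly less than `π/2`
with `ω'`: `⟪y, x'⟫ ≤ δ` on `ω'`. Project `y` onto the closed convex cone `K` generated by `ω'`.
Moreau's decomposition gives `y = p + (y - p)` with `p ∈ K`, `y - p ⊥ p` and `y - p` in the
polar cone of `K`; then `‖p‖² = ⟪y, p⟫ ≤ δ ‖p‖`, so normalising `y - p` yields a point of `ω'*`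
within `2δ` of `y`. Exchanging `ω` and `ω'` bounds the Hausdorff distance of the polars by `2δ`.
-/

open scoped RealInnerProductSpace

section ConvexCone

variable {E : Type*} [NormedAddCommGroup E] [InnerProductSpace ℝ E]

lemma norm_sub_inv_norm_smul_self {v : E} (hv : v ≠ 0) : ‖v - ‖v‖⁻¹ • v‖ = |‖v‖ - 1| := by
  have hn : ‖v‖ ≠ 0 := norm_ne_zero_iff.mpr hv
  calc ‖v - ‖v‖⁻¹ • v‖ = ‖(1 - ‖v‖⁻¹) • v‖ := by rw [sub_smul, one_smul]
    _ = |(1 - ‖v‖⁻¹) * ‖v‖| := by rw [norm_smul, Real.norm_eq_abs, abs_mul, abs_norm]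
    _ = |‖v‖ - 1| := by rw [sub_mul, one_mul, inv_mul_cancel₀ hn]

/-- Moreau decomposition of `y` along a complete convex cone `K`. -/
lemma exists_mem_cone_inner_sub_eq_zero {K : Set E} (hKc : IsComplete K) (hKconv : Convex ℝ K)
    (hK0 : (0 : E) ∈ K) (hKsmul : ∀ t : ℝ, 0 ≤ t → ∀ w ∈ K, t • w ∈ K) (y : E) :
    ∃ p ∈ K, ⟪y - p, p⟫ = 0 ∧ ∀ w ∈ K, ⟪y - p, w⟫ ≤ 0 := by
  obtain ⟨p, hpK, hpmin⟩ := exists_norm_eq_iInf_of_complete_convex ⟨0, hK0⟩ hKc hKconv y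
  have hvar : ∀ w ∈ K, ⟪y - p, w - p⟫ ≤ 0 :=
    (norm_eq_iInf_iff_real_inner_le_zero hKconv hpK).mp hpmin
  have hperp : ⟪y - p, p⟫ = 0 := by
    have h2p := hvar ((2 : ℝ) • p) (hKsmul 2 zero_le_two p hpK)
    have h0 := hvar 0 hK0
    rw [two_smul, add_sub_cancel_right] at h2p
    rw [zero_sub, inner_neg_right] at h0
    linarith
  refine ⟨p, hpK, hperp, fun w hw => ?_⟩
  simpa [inner_sub_right, hperp] using hvar w hw

lemma exists_norm_eq_one_inner_nonpos_of_inner_le {K : Set E} (hKc : IsComplete K)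
    (hKconv : Convex ℝ K) (hK0 : (0 : E) ∈ K) (hKsmul : ∀ t : ℝ, 0 ≤ t → ∀ w ∈ K, t • w ∈ K)
    {y : E} (hy : ‖y‖ = 1) {δ : ℝ} (hδ0 : 0 ≤ δ) (hδ1 : δ < 1)
    (hyK : ∀ w ∈ K, ⟪y, w⟫ ≤ δ * ‖w‖) :
    ∃ z : E, ‖z‖ = 1 ∧ (∀ w ∈ K, ⟪z, w⟫ ≤ 0) ∧ ‖y - z‖ ≤ 2 * δ := by
  obtain ⟨p, hpK, hperp, hpolar⟩ := exists_mem_cone_inner_sub_eq_zero hKc hKconv hK0 hKsmul y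
  have hp : ‖p‖ ≤ δ := by
    have hyp : ⟪y, p⟫ = ‖p‖ ^ 2 := by
      rw [inner_sub_left, sub_eq_zero] at hperp
      rw [hperp, real_inner_self_eq_norm_sq]
    nlinarith [hyK p hpK, norm_nonneg p]
  have hdist : |‖y - p‖ - 1| ≤ ‖p‖ := by
    simpa [hy] using abs_norm_sub_norm_le (y - p) y
  have hpos : 0 < ‖y - p‖ := by linarith [abs_le.mp hdist]
  refine ⟨‖y - p‖⁻¹ • (y - p), ?_, fun w hw => ?_, ?_⟩
  · rw [norm_smul, norm_inv, norm_norm, inv_mul_cancel₀ hpos.ne']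
  · rw [real_inner_smul_left]
    exact mul_nonpos_of_nonneg_of_nonpos (inv_nonneg.mpr hpos.le) (hpolar w hw)
  · calc ‖y - ‖y - p‖⁻¹ • (y - p)‖ ≤ ‖y - (y - p)‖ + ‖(y - p) - ‖y - p‖⁻¹ • (y - p)‖ :=
          norm_sub_le_norm_sub_add_norm_sub _ _ _
      _ ≤ ‖p‖ + ‖p‖ := by
          rw [sub_sub_cancel, norm_sub_inv_norm_smul_self (norm_pos_iff.mp hpos)]
          exact add_le_add le_rfl hdist
      _ ≤ 2 * δ := by linarith

end ConvexCone

lemma norm_smul_coe_sph {m : ℕ} {r : ℝ} (hr : 0 ≤ r) (x : Sph m) : ‖r • (x : Euc m)‖ = r := by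
  rw [norm_smul, norm_eq_of_mem_sphere, mul_one, Real.norm_of_nonneg hr]

lemma smul_mem_cone {m : ℕ} {A : Set (Sph m)} {t : ℝ} (ht : 0 ≤ t) {w : Euc m}
    (hw : w ∈ cone A) : t • w ∈ cone A := by
  obtain ⟨r, hr, x, hx, rfl⟩ := hw
  exact ⟨t * r, mul_nonneg ht hr, x, hx, (mul_smul t r _).symm⟩

lemma zero_mem_cone {m : ℕ} {A : Set (Sph m)} (hA : A.Nonempty) : (0 : Euc m) ∈ cone A :=
  let ⟨x, hx⟩ := hA
  ⟨0, le_rfl, x, hx, (zero_smul ℝ _).symm⟩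

lemma isCompact_cone_inter_closedBall {m : ℕ} {A : Set (Sph m)} (hA : IsCompact A) (R : ℝ) :
    IsCompact (cone A ∩ closedBall 0 R) := by
  have himage : cone A ∩ closedBall 0 R =
      (fun q : ℝ × Sph m => q.1 • (q.2 : Euc m)) '' (Icc 0 R ×ˢ A) := by
    ext v
    constructor
    · rintro ⟨⟨r, hr, x, hx, rfl⟩, hball⟩
      rw [mem_closedBall_zero_iff, norm_smul_coe_sph hr] at hball
      exact ⟨(r, x), ⟨⟨hr, hball⟩, hx⟩, rfl⟩
    · rintro ⟨⟨r, x⟩, ⟨⟨hr, hrR⟩, hx⟩, rfl⟩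
      refine ⟨⟨r, hr, x, hx, rfl⟩, ?_⟩
      rwa [mem_closedBall_zero_iff, norm_smul_coe_sph hr]
  rw [himage]
  exact (isCompact_Icc.prod hA).image
    (continuous_fst.smul (continuous_subtype_val.comp continuous_snd))

lemma isClosed_cone {m : ℕ} {A : Set (Sph m)} (hA : IsCompact A) : IsClosed (cone A) := by
  refine (CompactlyGeneratedSpace.isClosed_iff_of_t2 _).mpr fun K hK => ?_
  obtain ⟨R, hKR⟩ := hK.isBounded.subset_closedBall 0
  have hK_eq : cone A ∩ K = (cone A ∩ closedBall 0 R) ∩ K := by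
    rw [inter_assoc, inter_eq_right.mpr hKR]
  rw [hK_eq]
  exact (isCompact_cone_inter_closedBall hA R).isClosed.inter hK.isClosed

lemma exists_mem_spolar_dist_le {m : ℕ} {A : Set (Sph m)} (hA : IsCompact A)
    (hAne : A.Nonempty) (hAconv : SphConvex A) {δ : ℝ} (hδ0 : 0 ≤ δ) (hδ1 : δ < 1) (y : Sph m)
    (hy : ∀ x ∈ A, ⟪(y : Euc m), (x : Euc m)⟫ ≤ δ) :
    ∃ z ∈ spolar A, dist y z ≤ 2 * δ := by
  have hyK : ∀ w ∈ cone A, ⟪(y : Euc m), w⟫ ≤ δ * ‖w‖ := by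
    rintro _ ⟨r, hr, x, hx, rfl⟩
    rw [real_inner_smul_right, norm_smul_coe_sph hr, mul_comm δ]
    exact mul_le_mul_of_nonneg_left (hy x hx) hr
  obtain ⟨z, hz, hzpolar, hyz⟩ := exists_norm_eq_one_inner_nonpos_of_inner_le
    (isClosed_cone hA).isComplete hAconv (zero_mem_cone hAne) (fun _ ht _ => smul_mem_cone ht)
    (norm_eq_of_mem_sphere y) hδ0 hδ1 hyK
  refine ⟨⟨z, mem_sphere_zero_iff_norm.mpr hz⟩, fun x hx => ?_, ?_⟩
  · exact hzpolar x ⟨1, zero_le_one, x, hx, (one_smul ℝ _).symm⟩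
  · rwa [Subtype.dist_eq, dist_eq_norm]

lemma inner_le_inner_add_dist {m : ℕ} (y x x' : Sph m) :
    ⟪(y : Euc m), (x' : Euc m)⟫ ≤ ⟪(y : Euc m), (x : Euc m)⟫ + dist x' x := by
  have h := real_inner_le_norm (y : Euc m) ((x' : Euc m) - x)
  rw [norm_eq_of_mem_sphere, one_mul, inner_sub_right, ← dist_eq_norm, ← Subtype.dist_eq] at h
  linarith

lemma exists_mem_spolar_dist_le_of_hausdorffDist_lt {m : ℕ} {A B : Set (Sph m)}
    (hA : A.Nonempty) (hB : IsCompact B) (hBne : B.Nonempty) (hBconv : SphConvex B) {δ : ℝ}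
    (hδ1 : δ < 1) (hAB : hausdorffDist A B < δ) {y : Sph m} (hy : y ∈ spolar A) :
    ∃ z ∈ spolar B, dist y z ≤ 2 * δ := by
  have hfin : hausdorffEDist A B ≠ ⊤ :=
    hausdorffEDist_ne_top_of_nonempty_of_bounded hA hBne isBounded_of_compactSpace
      isBounded_of_compactSpace
  refine exists_mem_spolar_dist_le hB hBne hBconv (hausdorffDist_nonneg.trans hAB.le) hδ1 y
    fun x' hx' => ?_
  obtain ⟨x, hx, hxx'⟩ := exists_dist_lt_of_hausdorffDist_lt' hx' hAB hfin
  linarith [inner_le_inner_add_dist y x x', hy x hx, dist_comm x x']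

/-- the spherical polar map is continuous for the Hausdorff metric on
nonempty compact spherically convex sets. -/
theorem spolar_continuous (m : ℕ) :
    ∀ ω : Set (Sph m), IsCompact ω → ω.Nonempty → SphConvex ω →
      ∀ ε > (0 : ℝ), ∃ δ > (0 : ℝ), ∀ ω' : Set (Sph m),
        IsCompact ω' → ω'.Nonempty → SphConvex ω' →
        Metric.hausdorffDist ω ω' < δ →
        Metric.hausdorffDist (spolar ω) (spolar ω') < ε := by
  intro ω hω hωne hωconv ε hε
  set δ := min (ε / 3) (1 / 2)
  have hδ0 : 0 < δ := lt_min (by linarith) (by norm_num)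
  have hδ1 : δ < 1 := (min_le_right _ _).trans_lt (by norm_num)
  refine ⟨δ, hδ0, fun ω' hω' hω'ne hω'conv hH => ?_⟩
  have hle : hausdorffDist (spolar ω) (spolar ω') ≤ 2 * δ := by
    refine hausdorffDist_le_of_mem_dist (by linarith) (fun y hy => ?_) (fun y hy => ?_)
    · exact exists_mem_spolar_dist_le_of_hausdorffDist_lt hωne hω' hω'ne hω'conv hδ1 hH hy
    · exact exists_mem_spolar_dist_le_of_hausdorffDist_lt hω'ne hω hωne hωconv hδ1
        (hausdorffDist_comm.trans_lt hH) hy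
  linarith [min_le_left (ε / 3) (1 / 2)]
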